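/- arXiv:1511.00041 — 9 statements merged into one kernel-verified Lean document; each statement's English description precedes it below -/
import Mathlib

section
/- For any integers n ≥ 1 and a ≥ 2, there exists a labeling function assigning to each element of {1,...,n} a distinct string of length ⌈log_a n⌉ over the alphabet {0,1,...,a} such that in every position, each letter is used at most ⌈n/a⌉ times. -/
/-!
Write `x < n` in base `a`. Position `0` of the label of `x` is its last digit `x % a`, and
position `i ≥ 1` is its `i`-th digit shifted by the last one, modulo `a`. Knowing position `0`,
every other position gives back the corresponding digit, so the labels of the numbers below
`a ^ ⌈log_a n⌉` are distinct. Conversely, the letter at any position together with `x / a`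
determines `x % a`, hence `x`; so a letter class injects into `{0, …, ⌈n/a⌉ - 1}` via
`x ↦ x / a`.
-/

namespace BalancedLabeling

theorem mod_pow_eq_of_digit_eq {a x y ℓ : ℕ}
    (h : ∀ i < ℓ, x / a ^ i % a = y / a ^ i % a) : x % a ^ ℓ = y % a ^ ℓ := by
  induction ℓ with
  | zero => simp [Nat.mod_one]
  | succ ℓ ih =>
    rw [Nat.mod_pow_succ, Nat.mod_pow_succ, ih fun i hi => h i (by omega), h ℓ (by omega)]

theorem eq_of_digit_eq {a x y ℓ : ℕ} (hx : x < a ^ ℓ) (hy : y < a ^ ℓ)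
    (h : ∀ i < ℓ, x / a ^ i % a = y / a ^ i % a) : x = y := by
  rw [← Nat.mod_eq_of_lt hx, ← Nat.mod_eq_of_lt hy, mod_pow_eq_of_digit_eq h]

theorem card_le_of_injOn_div {n a : ℕ} (ha : 0 < a) (s : Finset (Fin n))
    (hs : Set.InjOn (fun x : Fin n => x.val / a) s) : s.card ≤ (n + a - 1) / a := by
  calc s.card ≤ (Finset.range ((n + a - 1) / a)).card := by
        refine Finset.card_le_card_of_injOn _ (fun x _ => ?_) hs
        have hx := x.isLt
        have hdiv := Nat.div_mul_le_self x.val a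
        rw [Finset.coe_range, Set.mem_Iio, Nat.lt_iff_add_one_le, Nat.le_div_iff_mul_le ha,
          add_one_mul]
        omega
    _ = (n + a - 1) / a := Finset.card_range _

def shiftedDigit (a x i : ℕ) : ℕ :=
  if i = 0 then x % a else (x / a ^ i + x % a) % a

theorem shiftedDigit_lt {a : ℕ} (ha : 0 < a) (x i : ℕ) : shiftedDigit a x i < a := by
  unfold shiftedDigit
  split <;> exact Nat.mod_lt _ ha

theorem digit_eq_of_shiftedDigit_eq {a x y i : ℕ}
    (h₀ : shiftedDigit a x 0 = shiftedDigit a y 0) (hᵢ : shiftedDigit a x i = shiftedDigit a y i) :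
    x / a ^ i % a = y / a ^ i % a := by
  replace h₀ : x % a = y % a := by simpa [shiftedDigit] using h₀
  rcases Nat.eq_zero_or_pos i with rfl | hi
  · simpa using h₀
  · simp only [shiftedDigit, hi.ne', if_false, h₀] at hᵢ
    exact Nat.ModEq.add_right_cancel' _ hᵢ

theorem eq_of_shiftedDigit_eq_of_div_eq {a x y i : ℕ}
    (h : shiftedDigit a x i = shiftedDigit a y i) (hdiv : x / a = y / a) : x = y := by
  have hmod : x % a = y % a := by
    rcases Nat.eq_zero_or_pos i with rfl | hi
    · simpa [shiftedDigit] using h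
    · have hdigit : x / a ^ i = y / a ^ i := by
        obtain ⟨j, rfl⟩ := Nat.exists_eq_add_of_lt hi
        rw [zero_add, pow_succ', ← Nat.div_div_eq_div_mul, ← Nat.div_div_eq_div_mul, hdiv]
      simp only [shiftedDigit, hi.ne', if_false, hdigit] at h
      simpa [Nat.ModEq] using Nat.ModEq.add_left_cancel' _ h
  rw [← Nat.div_add_mod x a, ← Nat.div_add_mod y a, hdiv, hmod]

end BalancedLabeling

open BalancedLabeling in
theorem stmt0_general (n a : ℕ) (ha : 2 ≤ a) :
    ∃ L : Fin n → Fin (Nat.clog a n) → Fin (a + 1),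
      Function.Injective L ∧
      ∀ (i : Fin (Nat.clog a n)) (c : Fin (a + 1)),
        (Finset.univ.filter (fun x : Fin n => L x i = c)).card ≤ (n + a - 1) / a := by
  have ha₀ : 0 < a := by omega
  refine ⟨fun x i => ⟨shiftedDigit a x i, (shiftedDigit_lt ha₀ x i).trans a.lt_succ_self⟩,
    fun x y hxy => ?_, fun i c => card_le_of_injOn_div ha₀ _ fun x hx y hy hdiv => ?_⟩
  · have hpow : n ≤ a ^ Nat.clog a n := Nat.le_pow_clog (by omega) n
    refine Fin.ext (eq_of_digit_eq (x.isLt.trans_le hpow) (y.isLt.trans_le hpow) fun i hi => ?_)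
    have hlabel (j : Fin (Nat.clog a n)) : shiftedDigit a x j = shiftedDigit a y j :=
      Fin.val_eq_of_eq (congrFun hxy j)
    exact digit_eq_of_shiftedDigit_eq (hlabel ⟨0, by omega⟩) (hlabel ⟨i, hi⟩)
  · simp only [Finset.coe_filter, Finset.mem_univ, true_and, Set.mem_ofPred_eq] at hx hy
    exact Fin.ext (eq_of_shiftedDigit_eq_of_div_eq (Fin.val_eq_of_eq (hx.trans hy.symm)) hdiv)

/-- For any integers `n ≥ 1` and `a ≥ 2`, there is a labeling assigning to each element of
`{1,…,n}` a distinct string of length `⌈log_a n⌉` over the alphabet `{0,1,…,a}` such that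
in every position each letter is used at most `⌈n/a⌉` times. -/
theorem stmt0 (n a : ℕ) (hn : 1 ≤ n) (ha : 2 ≤ a) :
    ∃ L : Fin n → Fin (Nat.clog a n) → Fin (a + 1),
      Function.Injective L ∧
      ∀ (i : Fin (Nat.clog a n)) (c : Fin (a + 1)),
        (Finset.univ.filter (fun x : Fin n => L x i = c)).card ≤ (n + a - 1) / a :=
  stmt0_general n a ha
end

section
/- For n ≥ 2 and 1 ≤ k < n/2, there exists an (n,k)-separating system S with |S| ≤ ⌈n/k⌉ · ⌈log_{⌈n/k⌉} n⌉. -/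
/-!
Put `b = ⌈n/k⌉`, so `n ≤ k * b`, and let `T` be the transposition of the `k × b` grid on
`[0, k * b)`. Label `i < n` by the word of residues `T^[r] i % b` for `r < ⌈log_b n⌉`; the
elements carrying a given letter at a given position form a set of size at most `k`, since
`T^[r]` is injective and a residue class of `[0, k * b)` has `k` elements. Distinct elements
get distinct words: if `x % b = y % b` then `x - y = b * (T x - T y)`, so equal words force
`b ^ ⌈log_b n⌉ ∣ i - j`, while `|i - j| < n ≤ b ^ ⌈log_b n⌉`. The `b ⌈log_b n⌉` fibers of
the positions therefore form the separating system.
-/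

/-- An `(n,k)`-separating system on `Fin n`: a family of subsets each of size at most `k`
such that every pair of distinct elements is separated by some member. -/
def IsSeparatingSystem (n k : ℕ) (S : Finset (Finset (Fin n))) : Prop :=
  (∀ s ∈ S, s.card ≤ k) ∧
  ∀ i j : Fin n, i ≠ j → ∃ s ∈ S, (i ∈ s ∧ j ∉ s) ∨ (j ∈ s ∧ i ∉ s)

open Finset Function

section CoordinateFibers

variable {n k : ℕ} {ι β : Type*} [Fintype ι] [Fintype β] [DecidableEq β]

def coordinateFibers (w : Fin n → ι → β) : Finset (Finset (Fin n)) :=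
  univ.image fun p : ι × β => ({i | w i p.1 = p.2} : Finset (Fin n))

theorem card_coordinateFibers_le (w : Fin n → ι → β) :
    (coordinateFibers w).card ≤ Fintype.card ι * Fintype.card β :=
  card_image_le.trans_eq (card_univ.trans (Fintype.card_prod ι β))

theorem isSeparatingSystem_coordinateFibers {w : Fin n → ι → β} (hw : Injective w)
    (hfiber : ∀ r c, #{i | w i r = c} ≤ k) : IsSeparatingSystem n k (coordinateFibers w) := by
  refine ⟨?_, fun i j hij => ?_⟩
  · simp only [coordinateFibers, mem_image, mem_univ, true_and, forall_exists_index]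
    rintro _ ⟨r, c⟩ rfl
    exact hfiber r c
  · obtain ⟨r, hr⟩ : ∃ r, w i r ≠ w j r := by
      by_contra! h
      exact hij (hw (funext h))
    refine ⟨({l | w l r = w i r} : Finset (Fin n)), mem_image_of_mem _ (mem_univ (r, w i r)),
      Or.inl ?_⟩
    simpa [eq_comm] using hr

end CoordinateFibers

/-- Reading `x < k * b` as the cell `(x / b, x % b)` of a `k × b` grid, this is the
transposition of the grid. -/
def gridTranspose (k b x : ℕ) : ℕ := x % b * k + x / b

namespace gridTranspose

variable {k b : ℕ}

theorem mapsTo : Set.MapsTo (gridTranspose k b) (Set.Iio (k * b)) (Set.Iio (k * b)) := by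
  intro x (hx : x < k * b)
  have hb : 0 < b := Nat.pos_of_mul_pos_left (Nat.zero_lt_of_lt hx)
  have hq : x / b < k := Nat.div_lt_of_lt_mul (by rwa [mul_comm])
  have hc : x % b + 1 ≤ b := Nat.mod_lt x hb
  show x % b * k + x / b < k * b
  nlinarith

theorem injOn : Set.InjOn (gridTranspose k b) (Set.Iio (k * b)) := by
  have decode : ∀ x < k * b, x = b * (gridTranspose k b x % k) + gridTranspose k b x / k := by
    intro x hx
    have hk : 0 < k := Nat.pos_of_mul_pos_right (Nat.zero_lt_of_lt hx)
    have hq : x / b < k := Nat.div_lt_of_lt_mul (by rwa [mul_comm])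
    rw [gridTranspose, mul_comm (x % b), Nat.mul_add_mod, Nat.mod_eq_of_lt hq,
      Nat.mul_add_div hk, Nat.div_eq_of_lt hq, add_zero, Nat.div_add_mod]
  intro x hx y hy hxy
  rw [decode x hx, decode y hy, hxy]

theorem sub_eq_mul_sub {x y : ℕ} (hxy : x % b = y % b) :
    (x : ℤ) - y = b * (gridTranspose k b x - gridTranspose k b y) := by
  conv_lhs => rw [← Nat.div_add_mod x b, ← Nat.div_add_mod y b, hxy]
  simp only [gridTranspose, hxy]
  push_cast
  ring

theorem sub_eq_pow_mul_sub_iterate {x y r : ℕ}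
    (h : ∀ s < r, (gridTranspose k b)^[s] x % b = (gridTranspose k b)^[s] y % b) :
    (x : ℤ) - y = b ^ r * ((gridTranspose k b)^[r] x - (gridTranspose k b)^[r] y) := by
  induction r with
  | zero => simp
  | succ r ih =>
    rw [ih fun s hs => h s (by omega), iterate_succ_apply', iterate_succ_apply',
      sub_eq_mul_sub (h r r.lt_succ_self), pow_succ, mul_assoc]

theorem eq_of_iterate_mod_eq {x y m : ℕ} (hx : x < b ^ m) (hy : y < b ^ m)
    (h : ∀ s < m, (gridTranspose k b)^[s] x % b = (gridTranspose k b)^[s] y % b) : x = y := by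
  have hdvd : (b ^ m : ℤ) ∣ (x : ℤ) - y := ⟨_, sub_eq_pow_mul_sub_iterate h⟩
  have habs : |(x : ℤ) - y| < b ^ m := by
    have hx' : (x : ℤ) < b ^ m := by exact_mod_cast hx
    have hy' : (y : ℤ) < b ^ m := by exact_mod_cast hy
    rw [abs_lt]
    constructor <;> omega
  have := Int.eq_zero_of_abs_lt_dvd hdvd habs
  omega

theorem card_filter_iterate_mod_eq_le {n : ℕ} (hn : n ≤ k * b) (r c : ℕ) :
    #{i : Fin n | (gridTranspose k b)^[r] i % b = c} ≤ k := by
  have hmaps := mapsTo (k := k) (b := b)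
  have hmem (i : Fin n) : (i : ℕ) ∈ Set.Iio (k * b) := show (i : ℕ) < k * b by omega
  have hlt (i : Fin n) : (gridTranspose k b)^[r] i < k * b := hmaps.iterate r (hmem i)
  calc #{i : Fin n | (gridTranspose k b)^[r] i % b = c}
      ≤ #(range k) := by
        refine card_le_card_of_injOn (fun i => (gridTranspose k b)^[r] i / b) ?_ ?_
        · intro i _
          simpa using Nat.div_lt_of_lt_mul (by rw [mul_comm]; exact hlt i)
        · intro i hci j hcj hij
          simp only [coe_filter, mem_univ, true_and, Set.mem_ofPred_eq] at hci hcj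
          exact Fin.ext <| injOn.iterate hmaps r (hmem i) (hmem j)
            (Nat.ext_div_mod hij (hci.trans hcj.symm))
    _ = k := card_range k

end gridTranspose

theorem exists_isSeparatingSystem_card_le {n k b : ℕ} (hb : 1 < b) (hn : n ≤ k * b) :
    ∃ S, IsSeparatingSystem n k S ∧ S.card ≤ b * Nat.clog b n := by
  set m := Nat.clog b n
  have hnm : n ≤ b ^ m := Nat.le_pow_clog hb n
  let w : Fin n → Fin m → Fin b := fun i r =>
    ⟨(gridTranspose k b)^[r] i % b, Nat.mod_lt _ (by omega)⟩
  refine ⟨coordinateFibers w, isSeparatingSystem_coordinateFibers ?_ ?_, ?_⟩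
  · intro i j hij
    exact Fin.ext <| gridTranspose.eq_of_iterate_mod_eq (by omega) (by omega)
      fun s hs => congrArg Fin.val (congrFun hij ⟨s, hs⟩)
  · intro r c
    simpa [w, Fin.ext_iff] using gridTranspose.card_filter_iterate_mod_eq_le hn r c
  · simpa [mul_comm] using card_coordinateFibers_le w

theorem stmt1_general (n k : ℕ) (hk : 1 ≤ k) (hkn : 2 * k < n) :
    ∃ S : Finset (Finset (Fin n)),
      IsSeparatingSystem n k S ∧
      S.card ≤ ((n + k - 1) / k) * Nat.clog ((n + k - 1) / k) n := by
  apply exists_isSeparatingSystem_card_le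
  · rw [Nat.lt_div_iff_mul_lt hk]
    omega
  · have := Nat.div_add_mod (n + k - 1) k
    have := Nat.mod_lt (n + k - 1) hk
    omega

/-- For `n ≥ 2` and `1 ≤ k < n/2`, there exists an `(n,k)`-separating system `S`
with `|S| ≤ ⌈n/k⌉ · ⌈log_{⌈n/k⌉} n⌉`. -/
theorem stmt1 (n k : ℕ) (hn : 2 ≤ n) (hk : 1 ≤ k) (hkn : 2 * k < n) :
    ∃ S : Finset (Finset (Fin n)),
      IsSeparatingSystem n k S ∧
      S.card ≤ ((n + k - 1) / k) * Nat.clog ((n + k - 1) / k) n :=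
  stmt1_general n k hk hkn
end

section
/- If S = {S_{i,j}} is constructed by taking, for each position i and each nonzero letter j, the set of elements whose label (from a labeling where each letter appears at most ⌈n/⌈n/k⌉⌉ ≤ k times per position and all labels are distinct) has letter j in position i, then S is an (n,k)-separating system. -/
theorem Function.exists_ne_zero_separating_of_ne {ι α : Type*} [Zero α] {f g : ι → α}
    (h : f ≠ g) :
    ∃ (i : ι) (j : α), j ≠ 0 ∧ ((f i = j ∧ g i ≠ j) ∨ (g i = j ∧ f i ≠ j)) := by
  obtain ⟨i, hi⟩ := Function.ne_iff.mp h
  by_cases hf : f i = 0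
  · exact ⟨i, g i, fun hg => hi (hf.trans hg.symm), Or.inr ⟨rfl, hi⟩⟩
  · exact ⟨i, f i, hf, Or.inl ⟨rfl, fun hg => hi hg.symm⟩⟩

theorem stmt2_general (n k ℓ : ℕ)
    (L : Fin n → Fin ℓ → Fin ((n + k - 1) / k + 1))
    (hinj : Function.Injective L)
    (hcount : ∀ (i : Fin ℓ) (c : Fin ((n + k - 1) / k + 1)),
      (Finset.univ.filter (fun x : Fin n => L x i = c)).card ≤ k) :
    (∀ (i : Fin ℓ) (j : Fin ((n + k - 1) / k + 1)), j ≠ 0 →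
      (Finset.univ.filter (fun x : Fin n => L x i = j)).card ≤ k) ∧
    (∀ p q : Fin n, p ≠ q →
      ∃ (i : Fin ℓ) (j : Fin ((n + k - 1) / k + 1)), j ≠ 0 ∧
        ((L p i = j ∧ L q i ≠ j) ∨ (L q i = j ∧ L p i ≠ j))) :=
  ⟨fun i j _ => hcount i j,
    fun _ _ hpq => Function.exists_ne_zero_separating_of_ne (hinj.ne hpq)⟩

/-- If labels are distinct strings over the alphabet `{0,…,⌈n/k⌉}` where each letter is used
at most `k` times in every position, then the sets `S_{i,j}` (elements whose label has the
nonzero letter `j` in position `i`) form an `(n,k)`-separating system. -/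
theorem stmt2 (n k ℓ : ℕ) (hk : 0 < k)
    (L : Fin n → Fin ℓ → Fin ((n + k - 1) / k + 1))
    (hinj : Function.Injective L)
    (hcount : ∀ (i : Fin ℓ) (c : Fin ((n + k - 1) / k + 1)),
      (Finset.univ.filter (fun x : Fin n => L x i = c)).card ≤ k) :
    (∀ (i : Fin ℓ) (j : Fin ((n + k - 1) / k + 1)), j ≠ 0 →
      (Finset.univ.filter (fun x : Fin n => L x i = j)).card ≤ k) ∧
    (∀ p q : Fin n, p ≠ q →
      ∃ (i : Fin ℓ) (j : Fin ((n + k - 1) / k + 1)), j ≠ 0 ∧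
        ((L p i = j ∧ L q i ≠ j) ∨ (L q i = j ∧ L p i ≠ j))) :=
  stmt2_general n k ℓ L hinj hcount
end

section
/- Let D be an orientation of a connected tree on n vertices with no immoralities. There is an adaptive procedure intervening on single vertices that identifies the root of D using at most O(log₂ n) interventions, where intervening on a vertex v reveals the directions of all edges incident to v (and then all edges directed away from identified directed edges by repeated application of Meek rule R1 are learned). -/
/-!
With no immoralities, the parents of a vertex are pairwise adjacent, so in a tree every vertex has
in-degree at most one: the orientation is an out-tree from a root `r`, and intervening on `c`
reveals, by rule R1, every edge below `c`. Call a vertex a root candidate while no incoming edge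
of it is known. The strategy intervenes on a vertex `c` minimising the total distance to the
current candidates. Unless `c = r`, in which case everything is learned, every remaining candidate
lies on the side of the edge `p → c` containing `c`'s parent `p`, and by minimality of `c` at most
half of the candidates lie there. After `⌊log₂ n⌋ + 1` rounds fewer than one candidate would be
left, which is impossible since `r` always is one.
-/

/-- The set of directed edges learned after intervening on the vertices of `I` in the
orientation `dir` of the skeleton `G`: the directions of all edges incident to an intervened
vertex are revealed (rule R0), and the set is closed under Meek rule R1 (if `c → a` is known,
`a − b` is an edge and `c, b` are non-adjacent, then `a → b` is learned). -/
inductive Learned {V : Type} (G : SimpleGraph V) (dir : V → V → Prop) (I : Set V) :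
    V → V → Prop
  | base (u v : V) : dir u v → (u ∈ I ∨ v ∈ I) → Learned G dir I u v
  | meek1 (c a b : V) : Learned G dir I c a → dir a b → ¬ G.Adj c b → Learned G dir I a b

open Finset Relation

theorem pow_mul_le_of_mul_succ_le {a : ℕ → ℕ} {b m : ℕ} (h : ∀ i < m, b * a (i + 1) ≤ a i) :
    b ^ m * a m ≤ a 0 := by
  induction m with
  | zero => simp
  | succ m ih =>
    calc b ^ (m + 1) * a (m + 1) = b ^ m * (b * a (m + 1)) := by ring
      _ ≤ b ^ m * a m := by gcongr; exact h m (by omega)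
      _ ≤ a 0 := ih fun i hi => h i (by omega)

namespace SimpleGraph

variable {V : Type} {G : SimpleGraph V}

theorem IsTree.not_adj_of_adj_of_adj (hT : G.IsTree) {a b c : V} (hab : G.Adj a b)
    (hbc : G.Adj b c) : ¬ G.Adj a c := fun hac =>
  hT.dist_ne_of_adj a hbc <| by rw [dist_eq_one_iff_adj.2 hab, dist_eq_one_iff_adj.2 hac]

theorem Connected.two_mul_card_filter_dist_lt_le (hG : G.Connected) (U : Finset V) {c x : V}
    (hcx : G.Adj c x) (hmin : ∑ u ∈ U, G.dist c u ≤ ∑ u ∈ U, G.dist x u) :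
    2 * #{u ∈ U | G.dist x u < G.dist c u} ≤ #U := by
  have hxc : G.dist x c = 1 := dist_eq_one_iff_adj.2 hcx.symm
  have key : ∀ u ∈ U,
      G.dist x u + 2 * (if G.dist x u < G.dist c u then 1 else 0) ≤ G.dist c u + 1 := by
    intro u _
    have := hG.dist_triangle (u := x) (v := c) (w := u)
    split_ifs <;> omega
  have hsum := Finset.sum_le_sum key
  simp only [sum_add_distrib, ← mul_sum, sum_boole, Nat.cast_id, sum_const, smul_eq_mul,
    mul_one] at hsum
  omega

structure IsOrientation (G : SimpleGraph V) (dir : V → V → Prop) : Prop where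
  adj : ∀ {u v}, dir u v → G.Adj u v
  dir_iff_not_dir : ∀ {u v}, G.Adj u v → (dir u v ↔ ¬ dir v u)

def NoImmoralities (G : SimpleGraph V) (dir : V → V → Prop) : Prop :=
  ∀ x y z, x ≠ y → ¬ G.Adj x y → dir x z → dir y z → False

namespace IsOrientation

variable {dir : V → V → Prop}

theorem eq_of_dir_of_dir (hD : G.IsOrientation dir) (hT : G.IsTree) (hImm : G.NoImmoralities dir)
    {x y z : V} (hx : dir x z) (hy : dir y z) : x = y := by
  by_contra hne
  by_cases hxy : G.Adj x y
  · exact hT.not_adj_of_adj_of_adj hxy (hD.adj hy) (hD.adj hx)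
  · exact hImm x y z hne hxy hx hy

theorem exists_root [Fintype V] (hD : G.IsOrientation dir) (hT : G.IsTree) :
    ∃ r, ∀ u, ¬ dir u r := by
  classical
  -- a parent map would inject the vertices into the edges, which are one fewer
  by_contra! h
  choose parent hparent using h
  have hinj : Function.Injective fun v : V =>
      (⟨s(parent v, v), G.mem_edgeSet.2 (hD.adj (hparent v))⟩ : G.edgeSet) := by
    intro v w hvw
    rw [Subtype.mk.injEq, Sym2.eq_iff] at hvw
    rcases hvw with ⟨-, hvw⟩ | ⟨hpv, hpw⟩
    · exact hvw
    · have hwv : dir w v := hpv ▸ hparent v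
      exact absurd (hpw ▸ hparent w) ((hD.dir_iff_not_dir (hD.adj hwv)).1 hwv)
  have hcard := Fintype.card_le_of_injective _ hinj
  rw [← edgeFinset_card] at hcard
  have htree := hT.card_edgeFinset
  omega

/-- In-degrees are at most one, so a path leaving `a` by any edge other than the one from
`a`'s parent must follow the orientation throughout. -/
theorem reflTransGen_of_isPath (hD : G.IsOrientation dir) (hT : G.IsTree)
    (hImm : G.NoImmoralities dir) {a v : V} (w : G.Walk a v) (hw : w.IsPath)
    (hparent : ∀ u, dir u a → u ∉ w.support) : ReflTransGen dir a v := by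
  induction w with
  | nil => exact .refl
  | @cons a b v hab w ih =>
    rw [Walk.cons_isPath_iff] at hw
    have hdir : dir a b := by
      by_contra h
      exact hparent b ((hD.dir_iff_not_dir hab.symm).2 h) (by simp)
    refine .head hdir (ih hw.1 fun u hu => ?_)
    rw [hD.eq_of_dir_of_dir hT hImm hu hdir]
    exact hw.2

theorem reflTransGen_of_root (hD : G.IsOrientation dir) (hT : G.IsTree)
    (hImm : G.NoImmoralities dir) {r : V} (hr : ∀ u, ¬ dir u r) (v : V) :
    ReflTransGen dir r v := by
  obtain ⟨w, hw, -⟩ := hT.existsUnique_path r v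
  exact hD.reflTransGen_of_isPath hT hImm w hw fun u hu => absurd hu (hr u)

theorem reflTransGen_of_dist_lt (hD : G.IsOrientation dir) (hT : G.IsTree)
    (hImm : G.NoImmoralities dir) {p c v : V} (hpc : dir p c) (h : G.dist c v < G.dist p v) :
    ReflTransGen dir c v := by
  classical
  obtain ⟨w, hw, hlen⟩ := hT.connected.exists_path_of_dist c v
  refine hD.reflTransGen_of_isPath hT hImm w hw fun u huc hu => ?_
  obtain rfl := hD.eq_of_dir_of_dir hT hImm huc hpc
  have := (dist_le (w.dropUntil u hu)).trans (w.length_dropUntil_le_length hu)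
  omega

end IsOrientation

end SimpleGraph

open SimpleGraph

section Learned

variable {V : Type} {G : SimpleGraph V} {dir : V → V → Prop}

theorem Learned.sound {I : Set V} {u v : V} (h : Learned G dir I u v) : dir u v := by
  cases h with
  | base _ _ h _ => exact h
  | meek1 _ _ _ _ h _ => exact h

theorem Learned.mono {I J : Set V} (hIJ : I ⊆ J) {u v : V} (h : Learned G dir I u v) :
    Learned G dir J u v := by
  induction h with
  | base u v h hI => exact .base u v h (hI.imp (@hIJ u) (@hIJ v))
  | meek1 c a b _ hab hcb ih => exact .meek1 c a b ih hab hcb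

/-- Rule R1 fires along every directed path, as a tree has no triangles. -/
theorem learned_of_reflTransGen (hD : G.IsOrientation dir) (hT : G.IsTree) {I : Set V} {c a b : V}
    (hc : c ∈ I) (hca : ReflTransGen dir c a) (hab : dir a b) : Learned G dir I a b := by
  induction hca generalizing b with
  | refl => exact .base c b hab (.inl hc)
  | @tail a' a _ ha'a ih =>
    exact .meek1 a' a b (ih ha'a) hab (hT.not_adj_of_adj_of_adj (hD.adj ha'a) (hD.adj hab))

theorem learned_of_root_mem (hD : G.IsOrientation dir) (hT : G.IsTree)
    (hImm : G.NoImmoralities dir) {I : Set V} {r : V} (hr : ∀ u, ¬ dir u r) (hrI : r ∈ I)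
    {u v : V} (huv : dir u v) : Learned G dir I u v :=
  learned_of_reflTransGen hD hT hrI (hD.reflTransGen_of_root hT hImm hr u) huv

theorem dist_lt_of_forall_not_learned (hD : G.IsOrientation dir) (hT : G.IsTree)
    (hImm : G.NoImmoralities dir) {I : Set V} {p c v : V} (hcI : c ∈ I) (hpc : dir p c)
    (hv : ∀ u, ¬ Learned G dir I u v) : G.dist p v < G.dist c v := by
  have hne : G.dist p v ≠ G.dist c v := by
    simpa only [SimpleGraph.dist_comm] using hT.dist_ne_of_adj v (hD.adj hpc)
  by_contra hle
  have hcv := hD.reflTransGen_of_dist_lt hT hImm hpc (v := v) (by omega)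
  rcases hcv.cases_tail with hvc | ⟨u, hcu, huv⟩
  · exact hv p (hvc ▸ .base p c hpc (.inr hcI))
  · exact hv u (learned_of_reflTransGen hD hT hcI hcu huv)

end Learned

section Strategy

variable {V : Type} {G : SimpleGraph V} {dir : V → V → Prop}

variable (G dir) in
def interventionSet (strat : (V → V → Prop) → V) : ℕ → Set V
  | 0 => ∅
  | i + 1 => insert (strat (Learned G dir (interventionSet strat i))) (interventionSet strat i)

theorem interventionSet_eq_setOf (strat : (V → V → Prop) → V) (i : ℕ) :
    interventionSet G dir strat i =
      {v | ∃ j < i, strat (Learned G dir (interventionSet G dir strat j)) = v} := by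
  induction i with
  | zero => simp [interventionSet]
  | succ i ih =>
    ext v
    simp only [interventionSet, ih, Set.mem_insert_iff, Set.mem_ofPred_eq,
      Nat.lt_succ_iff_lt_or_eq]
    grind

variable [Fintype V]

open Classical in
noncomputable def rootCandidates (L : V → V → Prop) : Finset V :=
  {v | ∀ u, ¬ L u v}

theorem mem_rootCandidates {L : V → V → Prop} {v : V} :
    v ∈ rootCandidates L ↔ ∀ u, ¬ L u v := by
  simp [rootCandidates]

theorem two_mul_card_rootCandidates_le (hD : G.IsOrientation dir) (hT : G.IsTree)
    (hImm : G.NoImmoralities dir) {I J : Set V} {c : V} (hIJ : I ⊆ J) (hcJ : c ∈ J)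
    (hc : ∀ y, ∑ u ∈ rootCandidates (Learned G dir I), G.dist c u ≤
      ∑ u ∈ rootCandidates (Learned G dir I), G.dist y u)
    (hJ : ¬ ∀ u v, dir u v → Learned G dir J u v) :
    2 * #(rootCandidates (Learned G dir J)) ≤ #(rootCandidates (Learned G dir I)) := by
  obtain ⟨r, hr⟩ := hD.exists_root hT
  have hcr : c ≠ r := by
    rintro rfl
    exact hJ fun u v => learned_of_root_mem hD hT hImm hr hcJ
  obtain ⟨p, -, hpc⟩ := (hD.reflTransGen_of_root hT hImm hr c).cases_tail.resolve_left hcr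
  have hsub : rootCandidates (Learned G dir J) ⊆
      {u ∈ rootCandidates (Learned G dir I) | G.dist p u < G.dist c u} := by
    intro v hv
    rw [mem_rootCandidates] at hv
    rw [mem_filter, mem_rootCandidates]
    exact ⟨fun u huv => hv u (huv.mono hIJ),
      dist_lt_of_forall_not_learned hD hT hImm hcJ hpc hv⟩
  calc 2 * #(rootCandidates (Learned G dir J))
      ≤ 2 * #{u ∈ rootCandidates (Learned G dir I) | G.dist p u < G.dist c u} := by
        gcongr
    _ ≤ #(rootCandidates (Learned G dir I)) :=
        hT.connected.two_mul_card_filter_dist_lt_le _ (hD.adj hpc).symm (hc p)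

theorem forall_learned_interventionSet (hD : G.IsOrientation dir) (hT : G.IsTree)
    (hImm : G.NoImmoralities dir) {strat : (V → V → Prop) → V}
    (hstrat : ∀ L y, ∑ u ∈ rootCandidates L, G.dist (strat L) u ≤
      ∑ u ∈ rootCandidates L, G.dist y u) {u v : V} (huv : dir u v) :
    Learned G dir (interventionSet G dir strat (Nat.log 2 (Fintype.card V) + 1)) u v := by
  set m := Nat.log 2 (Fintype.card V) + 1
  set a : ℕ → ℕ := fun i => #(rootCandidates (Learned G dir (interventionSet G dir strat i)))
  have hmono : Monotone (interventionSet G dir strat) :=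
    monotone_nat_of_le_succ fun i => Set.subset_insert _ _
  by_contra hm
  have halve : ∀ i < m, 2 * a (i + 1) ≤ a i := fun i hi =>
    two_mul_card_rootCandidates_le hD hT hImm (Set.subset_insert _ _) (Set.mem_insert _ _)
      (hstrat _) fun h => hm (Learned.mono (hmono hi) (h u v huv))
  obtain ⟨r, hr⟩ := hD.exists_root hT
  have ha_pos : 0 < a m :=
    card_pos.2 ⟨r, mem_rootCandidates.2 fun u hu => hr u hu.sound⟩
  have ha_zero : a 0 ≤ Fintype.card V := card_le_univ _
  have hpow : 2 ^ m * a m ≤ a 0 := pow_mul_le_of_mul_succ_le halve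
  have hlog : Fintype.card V < 2 ^ m := Nat.lt_pow_succ_log_self one_lt_two _
  have hle : 2 ^ m ≤ 2 ^ m * a m := Nat.le_mul_of_pos_right _ ha_pos
  omega

end Strategy

/-- There is an adaptive single-vertex intervention procedure that, on any orientation of a
tree with no immoralities, learns all edge directions (in particular identifies the root)
using `O(log₂ n)` interventions. -/
theorem stmt7 :
    ∃ C : ℕ, ∀ (V : Type) [Fintype V] [DecidableEq V] (G : SimpleGraph V), G.IsTree →
      ∃ strat : (V → V → Prop) → V,
        ∀ dir : V → V → Prop,
          (∀ u v : V, dir u v → G.Adj u v) →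
          (∀ u v : V, G.Adj u v → (dir u v ↔ ¬ dir v u)) →
          (∀ x y z : V, x ≠ y → ¬ G.Adj x y → dir x z → dir y z → False) →
          ∃ (m : ℕ) (q : ℕ → V),
            (∀ i : ℕ, q i = strat (fun a b =>
              Learned G dir {v : V | ∃ j < i, q j = v} a b)) ∧
            m ≤ C * (Nat.log 2 (Fintype.card V) + 1) ∧
            (∀ u v : V, dir u v → Learned G dir {v : V | ∃ j < m, q j = v} u v) := by
  refine ⟨1, fun V _ _ G hT => ?_⟩
  have : Nonempty V := hT.connected.nonempty
  choose strat _ hstrat using fun L : V → V → Prop =>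
    univ.exists_min_image (fun y => ∑ u ∈ rootCandidates L, G.dist y u) univ_nonempty
  refine ⟨strat, fun dir hdir hOr hImm => ?_⟩
  let q i := strat (Learned G dir (interventionSet G dir strat i))
  have hq (i : ℕ) : {v | ∃ j < i, q j = v} = interventionSet G dir strat i :=
    (interventionSet_eq_setOf strat i).symm
  refine ⟨Nat.log 2 (Fintype.card V) + 1, q, fun i => by rw [hq], by rw [one_mul], ?_⟩
  rw [hq]
  exact fun u v => forall_learned_interventionSet ⟨hdir _ _, hOr _ _⟩ hT hImm
    (fun L y => hstrat L y (mem_univ y))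
end

section
/- Any (n,k)-separating system with k < n/2 has size at least (n/k)·log_{ne/k} n. -/
/-!
Map each point `i` to its signature, the subfamily of sets of `S` containing `i`; separation makes
signatures distinct. With `x = k / n`, the sum of `x ^ #(signature of i)` over all points is then at
most the same sum over all subfamilies of `S`, namely `(1 + x) ^ #S ≤ exp (#S * x)`. By convexity of
`exp` it is at least `n * x ^ (∑ #signatures / n) ≥ n * x ^ (#S * k / n)`, since the signature sizes
add up to `∑ s ∈ S, #s ≤ #S * k`. Taking logarithms gives
`log n ≤ #S * k / n * (1 - log x) = #S * k / n * log (n * e / k)`.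
-/
open Finset Real Function

def IsSeparating {α : Type*} (S : Finset (Finset α)) : Prop :=
  ∀ i j, i ≠ j → ∃ s ∈ S, (i ∈ s ∧ j ∉ s) ∨ (j ∈ s ∧ i ∉ s)

theorem IsSeparating.injective_filter_mem {α : Type*} [DecidableEq α] {S : Finset (Finset α)}
    (hS : IsSeparating S) : Injective fun i ↦ {s ∈ S | i ∈ s} := by
  intro i j hij
  by_contra hne
  obtain ⟨s, hs, ⟨hi, hj⟩ | ⟨hj, hi⟩⟩ := hS i j hne
  all_goals
    have h := congrArg (s ∈ ·) hij
    simp [hs, hi, hj] at h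

theorem Finset.sum_card_filter_mem {α : Type*} [Fintype α] [DecidableEq α]
    (S : Finset (Finset α)) : ∑ i, #{s ∈ S | i ∈ s} = ∑ s ∈ S, #s := by
  simp only [card_filter]
  rw [sum_comm]
  refine sum_congr rfl fun s _ ↦ ?_
  simp

theorem Finset.sum_pow_card_le_add_one_pow {ι β R : Type*} [Fintype ι] [CommSemiring R]
    [PartialOrder R] [IsOrderedRing R] {T : ι → Finset β} (hT : Injective T) {S : Finset β}
    (hTS : ∀ i, T i ⊆ S) {x : R} (hx : 0 ≤ x) : ∑ i, x ^ #(T i) ≤ (x + 1) ^ #S := by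
  classical
  rw [← sum_pow_mul_eq_add_pow]
  simp only [one_pow, mul_one]
  rw [← sum_image (f := fun t ↦ x ^ #t) fun i _ j _ h ↦ hT h]
  refine sum_le_sum_of_subset_of_nonneg ?_ fun _ _ _ ↦ pow_nonneg hx _
  intro t ht
  obtain ⟨i, -, rfl⟩ := mem_image.1 ht
  exact mem_powerset.2 (hTS i)

theorem Real.card_mul_exp_mean_le_sum_exp {ι : Type*} [Fintype ι] [Nonempty ι] (y : ι → ℝ) :
    Fintype.card ι * exp ((∑ i, y i) / Fintype.card ι) ≤ ∑ i, exp (y i) := by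
  have hn : (0 : ℝ) < Fintype.card ι := by exact_mod_cast Fintype.card_pos
  have := convexOn_exp.map_sum_le (t := univ) (w := fun _ ↦ (Fintype.card ι : ℝ)⁻¹) (p := y)
    (fun _ _ ↦ by positivity) (by simp [hn.ne']) (fun _ _ ↦ Set.mem_univ _)
  simp only [smul_eq_mul, ← mul_sum] at this
  rw [div_eq_inv_mul]
  calc _ ≤ (Fintype.card ι : ℝ) * ((Fintype.card ι : ℝ)⁻¹ * ∑ i, exp (y i)) := by gcongr
    _ = _ := by field_simp

theorem IsSeparating.log_card_le {α : Type*} [Fintype α] [DecidableEq α]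
    {S : Finset (Finset α)} (hS : IsSeparating S) {k : ℕ} (hk : 0 < k)
    (hkn : k ≤ Fintype.card α) (hsize : ∀ s ∈ S, #s ≤ k) :
    log (Fintype.card α) ≤ #S * k / Fintype.card α * log (Fintype.card α * exp 1 / k) := by
  set n := Fintype.card α
  set c : α → ℕ := fun i ↦ #{s ∈ S | i ∈ s}
  have : Nonempty α := Fintype.card_pos_iff.1 (hk.trans_le hkn)
  have hn : (0 : ℝ) < n := by exact_mod_cast Fintype.card_pos
  set x : ℝ := k / n
  have hx : 0 < x := by positivity
  have hlogx : log x ≤ 0 := log_nonpos hx.le (div_le_one_of_le₀ (by exact_mod_cast hkn) hn.le)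
  have hc : (∑ i, c i : ℝ) ≤ #S * k := by
    exact_mod_cast (sum_card_filter_mem S).trans_le (sum_le_card_nsmul S _ k hsize)
  have key : exp (log n + (∑ i, c i : ℝ) / n * log x) ≤ exp (#S * x) :=
    calc exp (log n + (∑ i, c i : ℝ) / n * log x)
        = n * exp ((∑ i, c i * log x) / n) := by
          rw [exp_add, exp_log hn, ← sum_mul, div_mul_eq_mul_div]
      _ ≤ ∑ i, exp (c i * log x) := card_mul_exp_mean_le_sum_exp _
      _ = ∑ i, x ^ c i := by simp [← rpow_natCast, rpow_def_of_pos hx, mul_comm]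
      _ ≤ (x + 1) ^ #S :=
          sum_pow_card_le_add_one_pow hS.injective_filter_mem (fun _ ↦ filter_subset _ _) hx.le
      _ ≤ exp x ^ #S := by gcongr; linarith [add_one_le_exp x]
      _ = exp (#S * x) := by rw [← exp_nat_mul]
  have hL : log (n * exp 1 / k) = 1 - log x := by
    rw [log_div (by positivity) (by positivity), log_mul hn.ne' (exp_ne_zero 1), log_exp,
      log_div (by positivity) hn.ne']
    ring
  rw [exp_le_exp] at key
  rw [hL]
  calc log n ≤ #S * x - (∑ i, c i : ℝ) / n * log x := by linarith
    _ ≤ #S * x - #S * k / n * log x := by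
      gcongr ?_ - ?_
      exact mul_le_mul_of_nonpos_right (by gcongr) hlogx
    _ = #S * k / n * (1 - log x) := by ring

/-- Any `(n,k)`-separating system with `k < n/2` has size at least
`(n/k) · log_{ne/k} n`. -/
theorem stmt8 (n k : ℕ) (hk : 0 < k) (hkn : 2 * k < n)
    (S : Finset (Finset (Fin n)))
    (hsize : ∀ s ∈ S, s.card ≤ k)
    (hsep : ∀ i j : Fin n, i ≠ j → ∃ s ∈ S, (i ∈ s ∧ j ∉ s) ∨ (j ∈ s ∧ i ∉ s)) :
    ((n : ℝ) / k) * (Real.log n / Real.log ((n : ℝ) * Real.exp 1 / k)) ≤ S.card := by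
  have hk' : (0 : ℝ) < k := by exact_mod_cast hk
  have hkn' : (k : ℝ) < n := by exact_mod_cast (by omega : k < n)
  have hn : (0 : ℝ) < n := hk'.trans hkn'
  have hL : 0 < log (n * exp 1 / k) := by
    refine log_pos ((one_lt_div hk').2 ?_)
    nlinarith [add_one_le_exp (1 : ℝ)]
  have h := IsSeparating.log_card_le hsep hk (by rw [Fintype.card_fin]; omega) hsize
  rw [Fintype.card_fin] at h
  rw [mul_div_assoc', div_le_iff₀ hL]
  calc n / k * log n ≤ n / k * (#S * k / n * log (n * exp 1 / k)) := by gcongr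
    _ = #S * log (n * exp 1 / k) := by field_simp
end

section
/- If a family of subsets S of a finite set V separates every pair of distinct elements of V and each subset has size at most k with 2k ≤ |V|, then |S| ≥ (|V|/k) · log₂|V| / log₂(e·|V|/k), i.e. |S| ≥ (|V|/k) log_{|V|e/k} |V|. -/
open Finset Real

/-- If a family of subsets of a finite set `V` separates every pair of distinct elements
(equivalently, all membership signatures are distinct) and each subset has size at most `k`
with `2k ≤ |V|`, then `|S| ≥ (log₂ |V| / log₂(e·|V|/k)) · (|V|/k)`. -/
theorem stmt10 {V : Type*} [Fintype V] [DecidableEq V] (k : ℕ) (hk : 0 < k)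
    (hkV : 2 * k ≤ Fintype.card V)
    (S : Finset (Finset V))
    (hsize : ∀ s ∈ S, s.card ≤ k)
    (hsep : ∀ u v : V, u ≠ v → ∃ s ∈ S, (u ∈ s ∧ v ∉ s) ∨ (v ∈ s ∧ u ∉ s)) :
    Real.logb 2 (Fintype.card V) /
        Real.logb 2 (Real.exp 1 * (Fintype.card V : ℝ) / k) *
        ((Fintype.card V : ℝ) / k) ≤ S.card := by
  classical
  set n := Fintype.card V with hn
  have hn2 : 2 ≤ n := le_trans (by omega) hkV
  have hnR : (0:ℝ) < n := by exact_mod_cast (by omega : 0 < n)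
  have hkR : (0:ℝ) < k := by exact_mod_cast hk
  have hknR : (k:ℝ) ≤ n := by exact_mod_cast (by omega : k ≤ n)
  -- the signature map
  set σ : V → Finset (Finset V) := fun v => S.filter (fun s => v ∈ s) with hσdef
  have hσinj : Function.Injective σ := by
    intro u v huv
    by_contra hne
    obtain ⟨s, hsS, h⟩ := hsep u v hne
    rcases h with ⟨hu, hv⟩ | ⟨hv, hu⟩
    · have hmem : s ∈ σ u := mem_filter.2 ⟨hsS, hu⟩
      rw [huv] at hmem
      exact hv (mem_filter.1 hmem).2
    · have hmem : s ∈ σ v := mem_filter.2 ⟨hsS, hv⟩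
      rw [← huv] at hmem
      exact hu (mem_filter.1 hmem).2
  set m := S.card with hm
  have hm1 : 1 ≤ m := by
    obtain ⟨u, v, huv⟩ := Fintype.exists_pair_of_one_lt_card (by omega : 1 < n)
    obtain ⟨s, hs, -⟩ := hsep u v huv
    exact Finset.card_pos.2 ⟨s, hs⟩
  -- total weight bound
  have hW : ∑ v : V, (σ v).card ≤ m * k := by
    have h1 : ∑ v : V, (σ v).card = ∑ s ∈ S, s.card := by
      simp only [hσdef, Finset.card_filter]
      rw [Finset.sum_comm]
      refine Finset.sum_congr rfl fun s _ => ?_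
      simp [Finset.sum_ite_mem, Finset.univ_inter]
    rw [h1]
    calc ∑ s ∈ S, s.card ≤ ∑ s ∈ S, k := Finset.sum_le_sum fun s hs => hsize s hs
    _ = m * k := by rw [Finset.sum_const, smul_eq_mul]
  set L : ℝ := (k : ℝ) / n with hLdef
  have hLpos : 0 < L := div_pos hkR hnR
  have hL1 : L ≤ 1 := (div_le_one hnR).2 hknR
  set t : ℝ := (m * k : ℝ) / n with htdef
  have htpos : 0 < t := by
    apply div_pos _ hnR
    positivity
  -- AM-GM step
  have amgm : (n : ℝ) * L ^ t ≤ ∑ v : V, L ^ ((σ v).card) := by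
    have h := Real.geom_mean_le_arith_mean_weighted Finset.univ
      (fun _ : V => 1 / (n:ℝ)) (fun v => L ^ ((σ v).card))
      (fun i _ => by positivity)
      (by simp [Finset.card_univ, ← hn, mul_one_div, mul_inv_cancel₀ hnR.ne'])
      (fun i _ => by positivity)
    have hprod : ∏ v : V, (L ^ ((σ v).card)) ^ ((1:ℝ) / n)
        = L ^ ((∑ v : V, ((σ v).card : ℝ)) / n) := by
      have heach : ∀ v : V, (L ^ ((σ v).card)) ^ ((1:ℝ) / n) = L ^ (((σ v).card : ℝ) / n) := by
        intro v
        rw [← Real.rpow_natCast L ((σ v).card), ← Real.rpow_mul hLpos.le]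
        ring_nf
      simp only [heach]
      rw [← Real.rpow_sum_of_pos hLpos, ← Finset.sum_div]
    have hsum : ∑ v : V, (1 / (n:ℝ)) * L ^ ((σ v).card)
        = (1/(n:ℝ)) * ∑ v : V, L ^ ((σ v).card) := by
      rw [Finset.mul_sum]
    rw [hprod, hsum] at h
    have hWt : (∑ v : V, ((σ v).card : ℝ)) / n ≤ t := by
      rw [htdef]
      have hnum : (∑ v : V, ((σ v).card : ℝ)) ≤ ((m : ℝ) * k) := by
        push_cast
        exact_mod_cast hW
      gcongr
    have h2 : L ^ t ≤ L ^ ((∑ v : V, ((σ v).card : ℝ)) / n) :=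
      Real.rpow_le_rpow_of_exponent_ge hLpos hL1 hWt
    calc (n:ℝ) * L ^ t ≤ (n:ℝ) * L ^ ((∑ v : V, ((σ v).card : ℝ)) / n) := by
          exact mul_le_mul_of_nonneg_left h2 hnR.le
      _ ≤ (n:ℝ) * ((1/(n:ℝ)) * ∑ v : V, L ^ ((σ v).card)) := mul_le_mul_of_nonneg_left h hnR.le
      _ = ∑ v : V, L ^ ((σ v).card) := by field_simp
  -- counting step: distinct signatures live in the powerset of S
  have hcount : ∑ v : V, L ^ ((σ v).card) ≤ (1 + L) ^ m := by
    have himg : ∑ v : V, L ^ ((σ v).card)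
        = ∑ T ∈ Finset.univ.image σ, L ^ (T.card) := by
      rw [Finset.sum_image (fun a _ b _ h => hσinj h)]
    rw [himg]
    have hsub : Finset.univ.image σ ⊆ S.powerset := by
      intro T hT
      obtain ⟨v, -, rfl⟩ := Finset.mem_image.1 hT
      exact Finset.mem_powerset.2 (Finset.filter_subset _ _)
    calc ∑ T ∈ Finset.univ.image σ, L ^ (T.card)
        ≤ ∑ T ∈ S.powerset, L ^ (T.card) :=
          Finset.sum_le_sum_of_subset_of_nonneg hsub (fun T _ _ => by positivity)
      _ = (L + 1) ^ m := by
          rw [← Finset.prod_const, Finset.prod_add]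
          refine Finset.sum_congr rfl fun T hT => ?_
          simp
      _ = (1 + L) ^ m := by ring
  -- (1+L)^m ≤ exp(t·?)  since 1+L ≤ exp L and L*m = t
  have hexp : (1 + L) ^ m ≤ Real.exp t := by
    have h1 : (1 + L) ^ m ≤ (Real.exp L) ^ m := by
      apply pow_le_pow_left₀ (by positivity)
      linarith [Real.add_one_le_exp L]
    have h2 : (Real.exp L) ^ m = Real.exp (L * m) := by
      rw [← Real.exp_nat_mul]
      ring_nf
    have h3 : L * m = t := by
      rw [hLdef, htdef]; field_simp
    rw [h2, h3] at h1
    exact h1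
  -- combine: n ≤ (e·n/k)^t
  have hB : (n : ℝ) ≤ (Real.exp 1 * (n:ℝ) / k) ^ t := by
    have h1 : (n : ℝ) * L ^ t ≤ Real.exp t := le_trans amgm (le_trans hcount hexp)
    have hLt : 0 < L ^ t := Real.rpow_pos_of_pos hLpos t
    have h2 : (n : ℝ) ≤ Real.exp t * (L ^ t)⁻¹ := by
      rw [← le_div_iff₀ hLt] at h1
      simpa [div_eq_mul_inv] using h1
    have h3 : Real.exp t * (L ^ t)⁻¹ = (Real.exp 1 * (n:ℝ) / k) ^ t := by
      rw [← Real.exp_one_rpow t, ← Real.inv_rpow hLpos.le,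
        ← Real.mul_rpow (Real.exp_pos 1).le (by positivity)]
      congr 1
      rw [hLdef]
      field_simp
    rw [← h3]
    exact h2
  -- take logs
  have hB1 : (1:ℝ) < Real.exp 1 * (n:ℝ) / k := by
    have h2 : (2:ℝ) ≤ (n:ℝ) / k := by
      rw [le_div_iff₀ hkR]
      exact_mod_cast hkV
    have he : (2:ℝ) ≤ Real.exp 1 := by
      linarith [Real.add_one_le_exp (1:ℝ)]
    calc (1:ℝ) < 2 * 2 := by norm_num
      _ ≤ Real.exp 1 * ((n:ℝ)/k) := mul_le_mul he h2 (by norm_num) (by linarith)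
      _ = Real.exp 1 * (n:ℝ) / k := by ring
  have hlogB : 0 < Real.logb 2 (Real.exp 1 * (n:ℝ) / k) := Real.logb_pos (by norm_num) hB1
  have hlog : Real.logb 2 (n:ℝ) ≤ t * Real.logb 2 (Real.exp 1 * (n:ℝ) / k) := by
    calc Real.logb 2 (n:ℝ) ≤ Real.logb 2 ((Real.exp 1 * (n:ℝ) / k) ^ t) :=
          Real.logb_le_logb_of_le (by norm_num) hnR hB
      _ = t * Real.logb 2 (Real.exp 1 * (n:ℝ) / k) := by
          rw [Real.logb, Real.logb, Real.log_rpow (by positivity), mul_div_assoc]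
  have hfinal : Real.logb 2 (n:ℝ) / Real.logb 2 (Real.exp 1 * (n:ℝ) / k) * ((n:ℝ)/k) ≤ m := by
    have hd : Real.logb 2 (n:ℝ) / Real.logb 2 (Real.exp 1 * (n:ℝ) / k) ≤ t :=
      (div_le_iff₀ hlogB).2 hlog
    calc Real.logb 2 (n:ℝ) / Real.logb 2 (Real.exp 1 * (n:ℝ) / k) * ((n:ℝ)/k)
        ≤ t * ((n:ℝ)/k) := mul_le_mul_of_nonneg_right hd (by positivity)
      _ = m := by rw [htdef]; field_simp
  exact hfinal
end

section
/- If an orientation of an undirected graph G is acyclic and consistent with a perfect elimination ordering (every edge directed from the earlier vertex to the later vertex in the ordering), then the orientation has no immoralities. -/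
theorem stmt14_general {V : Type*} (G : SimpleGraph V) (ord : V → ℕ)
    (hpeo : ∀ v u w : V, G.Adj v u → G.Adj v w → ord u < ord v → ord w < ord v →
      u ≠ w → G.Adj u w)
    (dir : V → V → Prop)
    (hdir : ∀ u v : V, dir u v → G.Adj u v ∧ ord u < ord v) :
    ¬ ∃ x y z : V, x ≠ y ∧ ¬ G.Adj x y ∧ dir x z ∧ dir y z := by
  rintro ⟨x, y, z, hxy, hnadj, hxz, hyz⟩
  obtain ⟨hadj_xz, hlt_xz⟩ := hdir x z hxz
  obtain ⟨hadj_yz, hlt_yz⟩ := hdir y z hyz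
  exact hnadj (hpeo z x y hadj_xz.symm hadj_yz.symm hlt_xz hlt_yz hxy)

/-- If an orientation of a graph `G` is consistent with a perfect elimination ordering
(every edge directed from the earlier vertex to the later one), then it has no immoralities:
no triple `x, z, y` with `x, y` non-adjacent and `x → z`, `y → z`. -/
theorem stmt14 {V : Type*} (G : SimpleGraph V) (ord : V → ℕ)
    (hinj : Function.Injective ord)
    (hpeo : ∀ v u w : V, G.Adj v u → G.Adj v w → ord u < ord v → ord w < ord v →
      u ≠ w → G.Adj u w)
    (dir : V → V → Prop)
    (hdir : ∀ u v : V, dir u v → G.Adj u v ∧ ord u < ord v)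
    (hcover : ∀ u v : V, G.Adj u v → dir u v ∨ dir v u) :
    ¬ ∃ x y z : V, x ≠ y ∧ ¬ G.Adj x y ∧ dir x z ∧ dir y z :=
  stmt14_general G ord hpeo dir hdir
end

section
/- In the complete graph K_n oriented as a transitive tournament according to ordering σ, for any subset S ⊆ V, knowing the directions of all edges between S and its complement S^c determines, for each u ∈ S and v ∉ S, whether σ⁻¹(u) < σ⁻¹(v); moreover two vertices u,v not separated by any intervention set in a family I, and such that no chain of known directions forms u→w→v or v→w→u, have undetermined relative order (both orderings are consistent with all revealed cut directions). -/
/-!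
Part (1) only says that the revealed directions determine themselves. For part (2), the revealed
directions, closed under transitivity, form a strict partial order `P` contained in the order of
`σ`, and every linear extension of `P` agrees with `σ` on all revealed edges. Since `u` and `v`
are `P`-incomparable, `P` together with the pair ordered against `σ` is still a strict partial
order, and by Szpilrajn's theorem it has a linear extension, which reverses `u` and `v`.
-/

open Relation

theorem Relation.TransGen.lt_of_forall_lt {α β : Type*} [Preorder β] {r : α → α → Prop}
    {f : α → β} (h : ∀ a b, r a b → f a < f b) {a b : α} (hab : TransGen r a b) :
    f a < f b := by
  simpa only [transGen_eq_self] using hab.lift f h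

theorem Function.Injective.lt_iff_lt_of_lt_imp_lt {α β γ : Type*} [LinearOrder β] [Preorder γ]
    {f : α → β} {g : α → γ} (hf : Function.Injective f) {a b : α}
    (hab : f a < f b → g a < g b) (hba : f b < f a → g b < g a) : f a < f b ↔ g a < g b :=
  ⟨hab, fun h => (lt_or_gt_of_ne (hf.ne (ne_of_apply_ne g h.ne))).resolve_right
    fun h' => h.asymm (hba h')⟩

/-- For a strict order `r`, the transitive closure of `r` together with the pair `(y, x)`. -/
def Relation.adjoinLT {α : Type*} (r : α → α → Prop) (y x : α) (a b : α) : Prop :=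
  r a b ∨ (ReflGen r a y ∧ ReflGen r x b)

theorem Relation.isStrictOrder_adjoinLT {α : Type*} {r : α → α → Prop} [IsStrictOrder α r]
    {x y : α} (hxy : x ≠ y) (hr : ¬ r x y) : IsStrictOrder α (adjoinLT r y x) := by
  have hxy' : ¬ ReflGen r x y := by
    rintro (_ | h)
    exacts [hxy rfl, hr h]
  refine { irrefl := ?_, trans := ?_ }
  · rintro a (h | ⟨hay, hxa⟩)
    exacts [irrefl a h, hxy' (_root_.trans hxa hay)]
  · rintro a b c (hab | ⟨hay, hxb⟩) (hbc | ⟨hby, hxc⟩)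
    · exact .inl (_root_.trans hab hbc)
    · exact .inr ⟨_root_.trans (ReflGen.single hab) hby, hxc⟩
    · exact .inr ⟨hay, _root_.trans hxb (ReflGen.single hbc)⟩
    · exact (hxy' (_root_.trans hxb hby)).elim

theorem exists_equiv_fin_strictMono_of_isStrictOrder {V : Type*} [Fintype V] (r : V → V → Prop)
    [IsStrictOrder V r] : ∃ e : V ≃ Fin (Fintype.card V), ∀ a b, r a b → e a < e b := by
  let _ := partialOrderOfSO r
  let _ : Fintype (LinearExtension V) := inferInstanceAs (Fintype V)
  let e := (Fintype.orderIsoFinOfCardEq (LinearExtension V) rfl).symm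
  refine ⟨(Equiv.refl V : V ≃ LinearExtension V).trans e.toEquiv, fun a b hab => ?_⟩
  have hne : toLinearExtension a ≠ toLinearExtension b := fun h : a = b => irrefl_of r b (h ▸ hab)
  exact e.lt_iff_lt.mpr ((toLinearExtension.monotone (Or.inr hab)).lt_of_ne hne)

theorem exists_equiv_fin_strictMono_and_lt_of_not_rel {V : Type*} [Fintype V]
    (r : V → V → Prop) [IsStrictOrder V r] {x y : V} (hxy : x ≠ y) (hr : ¬ r x y) :
    ∃ e : V ≃ Fin (Fintype.card V), (∀ a b, r a b → e a < e b) ∧ e y < e x := by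
  have := isStrictOrder_adjoinLT hxy hr
  obtain ⟨e, he⟩ := exists_equiv_fin_strictMono_of_isStrictOrder (adjoinLT r y x)
  exact ⟨e, fun a b hab => he a b (.inl hab), he y x (.inr ⟨.refl, .refl⟩)⟩

/-- In the transitive tournament on `V` given by ordering `σ` (edge `u → v` iff `σ u < σ v`):
(1) the directions of the cut edges of a set `S` determine the relative order of any `u ∈ S`
and `v ∉ S`; (2) if `u, v` are not separated by any set of a family `I` and no chain of
revealed directions connects `u` and `v`, then their relative order is undetermined: some
ordering `σ'` agrees with all revealed cut directions but orders `u, v` oppositely. -/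
theorem stmt17 {V : Type*} [Fintype V] (σ : V ≃ Fin (Fintype.card V)) (I : Set (Set V)) :
    (∀ (S : Set V) (σ' : V ≃ Fin (Fintype.card V)),
      (∀ u ∈ S, ∀ v ∉ S, (σ u < σ v ↔ σ' u < σ' v)) →
      ∀ u ∈ S, ∀ v ∉ S, (σ u < σ v ↔ σ' u < σ' v)) ∧
    (∀ u v : V, u ≠ v →
      (∀ S ∈ I, ¬ ((u ∈ S ∧ v ∉ S) ∨ (v ∈ S ∧ u ∉ S))) →
      ¬ Relation.TransGen
        (fun a b : V => (∃ S ∈ I, (a ∈ S ∧ b ∉ S) ∨ (b ∈ S ∧ a ∉ S)) ∧ σ a < σ b) u v →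
      ¬ Relation.TransGen
        (fun a b : V => (∃ S ∈ I, (a ∈ S ∧ b ∉ S) ∨ (b ∈ S ∧ a ∉ S)) ∧ σ a < σ b) v u →
      ∃ σ' : V ≃ Fin (Fintype.card V),
        (∀ a b : V, (∃ S ∈ I, (a ∈ S ∧ b ∉ S) ∨ (b ∈ S ∧ a ∉ S)) →
          (σ a < σ b ↔ σ' a < σ' b)) ∧
        (σ' v < σ' u ↔ σ u < σ v)) := by
  refine ⟨fun _ _ h => h, fun u v huv _ hnuv hnvu => ?_⟩
  set sep : V → V → Prop := fun a b => ∃ S ∈ I, (a ∈ S ∧ b ∉ S) ∨ (b ∈ S ∧ a ∉ S)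
  have sep_symm : ∀ {a b}, sep a b → sep b a := fun ⟨S, hS, h⟩ => ⟨S, hS, h.symm⟩
  set P := TransGen fun a b => sep a b ∧ σ a < σ b
  have hPσ : ∀ {a b}, P a b → σ a < σ b := TransGen.lt_of_forall_lt fun _ _ h => h.2
  have : IsStrictOrder V P :=
    { irrefl := fun a h => (hPσ h).false, trans := fun _ _ _ => TransGen.trans }
  have agree : ∀ σ' : V ≃ Fin (Fintype.card V), (∀ a b, P a b → σ' a < σ' b) →
      ∀ a b, sep a b → (σ a < σ b ↔ σ' a < σ' b) := fun σ' hσ' a b hab =>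
    σ.injective.lt_iff_lt_of_lt_imp_lt (fun h => hσ' a b (.single ⟨hab, h⟩))
      (fun h => hσ' b a (.single ⟨sep_symm hab, h⟩))
  rcases lt_or_gt_of_ne (σ.injective.ne huv) with hσuv | hσvu
  · obtain ⟨σ', hσ', hvu⟩ := exists_equiv_fin_strictMono_and_lt_of_not_rel P huv hnuv
    exact ⟨σ', agree σ' hσ', iff_of_true hvu hσuv⟩
  · obtain ⟨σ', hσ', huv'⟩ := exists_equiv_fin_strictMono_and_lt_of_not_rel P huv.symm hnvu
    exact ⟨σ', agree σ' hσ', iff_of_false huv'.asymm hσvu.asymm⟩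
end

section
/- Any deterministic adaptive algorithm that, for every transitive tournament orientation of K_n, learns the full orientation via interventions (where each intervention on a set S reveals the directions of the cut edges between S and S^c, followed by closure under Meek rule R2: a−b oriented a→b if a→c and c→b known) must, for some orientation, produce a family of intervention sets that is a separating system on the n vertices. -/
/-! The adversary orders the vertices lexicographically by their membership vectors in the
intervention sets, ties broken by index. Since the algorithm is deterministic and the edges cut
by the first `i` sets are oriented by the first `i` coordinates alone, the run of the algorithm
against this order can be defined by recursion on `i`. Every edge revealed by the first `m` sets
strictly increases the length-`m` membership prefix, and these prefixes are monotone along the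
order, so every learned directed path strictly increases the prefix too. Two vertices that none
of the first `m` sets separates therefore stay unordered. -/

open Function Relation

theorem exists_equiv_fin_lt_iff {ι β : Type*} [Fintype ι] [LinearOrder β] {f : ι → β}
    (hf : Injective f) {k : ℕ} (hk : Fintype.card ι = k) :
    ∃ σ : ι ≃ Fin k, ∀ x y, σ x < σ y ↔ f x < f y :=
  letI := LinearOrder.lift' f hf
  ⟨(Fintype.orderIsoFinOfCardEq ι hk).symm.toEquiv,
    fun _ _ => (Fintype.orderIsoFinOfCardEq ι hk).symm.lt_iff_lt⟩

section LexPrefix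

variable {β : Type*}

def lexPrefix (m : ℕ) (a : Lex (ℕ → β)) : Lex (Fin m → β) :=
  toLex fun j => ofLex a j

theorem lexPrefix_eq_iff {m : ℕ} {a b : Lex (ℕ → β)} :
    lexPrefix m a = lexPrefix m b ↔ ∀ j < m, ofLex a j = ofLex b j := by
  simp [lexPrefix, funext_iff, Fin.forall_iff]

theorem monotone_lexPrefix [PartialOrder β] (m : ℕ) : Monotone (lexPrefix (β := β) m) := by
  intro a b hab
  obtain ⟨i, hagree, hlt⟩ | rfl := hab.lt_or_eq
  · by_cases hi : i < m
    · exact (show lexPrefix m a < lexPrefix m b from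
        ⟨⟨i, hi⟩, fun j hj => hagree j hj, hlt⟩).le
    · exact (lexPrefix_eq_iff.2 fun j hj => hagree j (by omega)).le
  · exact le_rfl

end LexPrefix

namespace AdaptiveIntervention

variable {α : Type*}

def Separates (S : Set α) (x y : α) : Prop :=
  (x ∈ S ∧ y ∉ S) ∨ (y ∈ S ∧ x ∉ S)

theorem Separates.symm {S : Set α} {x y : α} : Separates S x y → Separates S y x :=
  Or.symm

def Learned (r : α → α → Prop) (B : ℕ → Set α) (m : ℕ) : α → α → Prop :=
  TransGen fun x y => r x y ∧ ∃ i < m, Separates (B i) x y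

theorem learned_congr {r : α → α → Prop} {B B' : ℕ → Set α} {m : ℕ}
    (h : ∀ i < m, B i = B' i) : Learned r B m = Learned r B' m := by
  unfold Learned
  congr! 6 with x y i
  exact and_congr_right fun hi => by rw [h i hi]

def membership (B : ℕ → Set α) (x : α) : Lex (ℕ → Prop) :=
  toLex fun j => x ∈ B j

theorem lexPrefix_membership_eq_iff {B : ℕ → Set α} {m : ℕ} {x y : α} :
    lexPrefix m (membership B x) = lexPrefix m (membership B y) ↔
      ∀ j < m, ¬Separates (B j) x y := by
  simp only [lexPrefix_eq_iff, membership, ofLex_toLex, eq_iff_iff, Separates]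
  exact forall₂_congr fun _ _ => by tauto

theorem lexPrefix_membership_ne_iff {B : ℕ → Set α} {m : ℕ} {x y : α} :
    lexPrefix m (membership B x) ≠ lexPrefix m (membership B y) ↔
      ∃ j < m, Separates (B j) x y := by
  simp [lexPrefix_membership_eq_iff]

def adversaryKey (B : ℕ → Set α) (x : α) : Lex (Lex (ℕ → Prop) × α) :=
  toLex (membership B x, x)

theorem adversaryKey_injective (B : ℕ → Set α) : Injective (adversaryKey B) :=
  fun _ _ h => congrArg Prod.snd (toLex.injective h)

variable [LinearOrder α]

theorem adversaryKey_lt_iff {B : ℕ → Set α} {m : ℕ} {x y : α}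
    (h : lexPrefix m (membership B x) ≠ lexPrefix m (membership B y)) :
    adversaryKey B x < adversaryKey B y ↔
      lexPrefix m (membership B x) < lexPrefix m (membership B y) := by
  have hmono : Monotone fun k : Lex (Lex (ℕ → Prop) × α) => lexPrefix m (ofLex k).1 :=
    (monotone_lexPrefix m).comp Prod.Lex.monotone_fst_ofLex
  exact ⟨fun hlt => (hmono hlt.le).lt_of_ne h,
    fun hlt => hmono.reflect_lt (a := adversaryKey B x) (b := adversaryKey B y) hlt⟩

theorem lexPrefix_lt_of_learned {r : α → α → Prop} {B : ℕ → Set α} {m : ℕ} {x y : α}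
    (hr : ∀ x y, r x y → adversaryKey B x < adversaryKey B y) (h : Learned r B m x y) :
    lexPrefix m (membership B x) < lexPrefix m (membership B y) := by
  have edge : ∀ x y, r x y ∧ (∃ i < m, Separates (B i) x y) →
      lexPrefix m (membership B x) < lexPrefix m (membership B y) := by
    rintro x y ⟨hxy, hsep⟩
    exact (adversaryKey_lt_iff (lexPrefix_membership_ne_iff.2 hsep)).1 (hr x y hxy)
  induction h with
  | single hxy => exact edge _ _ hxy
  | tail _ hyz ih => exact ih.trans (edge _ _ hyz)

theorem exists_separates_of_learned {r : α → α → Prop} {B : ℕ → Set α} {m : ℕ} {x y : α}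
    (hr : ∀ x y, r x y → adversaryKey B x < adversaryKey B y) (h : Learned r B m x y) :
    ∃ i < m, Separates (B i) x y := by
  by_contra! hsep
  exact (lexPrefix_lt_of_learned hr h).ne (lexPrefix_membership_eq_iff.2 hsep)

theorem learned_adversaryKey_congr {B B' : ℕ → Set α} {m : ℕ} (h : ∀ i < m, B i = B' i) :
    Learned (fun x y => adversaryKey B x < adversaryKey B y) B m =
      Learned (fun x y => adversaryKey B' x < adversaryKey B' y) B' m := by
  have hprefix : ∀ x, lexPrefix m (membership B x) = lexPrefix m (membership B' x) := fun x =>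
    lexPrefix_eq_iff.2 fun j hj => by simp [membership, h j hj]
  rw [learned_congr h]
  unfold Learned
  congr! 3 with x y
  beta_reduce
  refine and_congr_left fun hsep => ?_
  have hne := lexPrefix_membership_ne_iff.2 hsep
  rw [adversaryKey_lt_iff (m := m) (by rwa [hprefix, hprefix]), adversaryKey_lt_iff hne,
    hprefix, hprefix]

/-- Truncating to the first `i` sets only makes the recursion well founded; it does not change
the learned relation (`adversaryRun_eq`). -/
noncomputable def adversaryRun (strat : (α → α → Prop) → Set α) (i : ℕ) : Set α :=
  let B : ℕ → Set α := fun j => if j < i then adversaryRun strat j else ∅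
  strat (Learned (fun x y => adversaryKey B x < adversaryKey B y) B i)

theorem adversaryRun_eq (strat : (α → α → Prop) → Set α) (i : ℕ) :
    adversaryRun strat i = strat (Learned (fun x y => adversaryKey (adversaryRun strat) x <
      adversaryKey (adversaryRun strat) y) (adversaryRun strat) i) := by
  rw [adversaryRun, learned_adversaryKey_congr fun j hj => if_pos hj]

end AdaptiveIntervention

open AdaptiveIntervention

theorem stmt18_general (n : ℕ)
    (strat : (Fin n → Fin n → Prop) → Set (Fin n))
    (seq : (Fin n ≃ Fin n) → ℕ → Set (Fin n))
    (hseq : ∀ (σ : Fin n ≃ Fin n) (m : ℕ),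
      seq σ m = strat (fun a b : Fin n => Relation.TransGen
        (fun x y : Fin n => σ x < σ y ∧
          ∃ i < m, (x ∈ seq σ i ∧ y ∉ seq σ i) ∨ (y ∈ seq σ i ∧ x ∉ seq σ i)) a b)) :
    ∃ σ : Fin n ≃ Fin n, ∀ m : ℕ,
      (∀ a b : Fin n, σ a < σ b →
        Relation.TransGen
          (fun x y : Fin n => σ x < σ y ∧
            ∃ i < m, (x ∈ seq σ i ∧ y ∉ seq σ i) ∨ (y ∈ seq σ i ∧ x ∉ seq σ i)) a b) →
      ∀ u v : Fin n, u ≠ v → ∃ i < m,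
        (u ∈ seq σ i ∧ v ∉ seq σ i) ∨ (v ∈ seq σ i ∧ u ∉ seq σ i) := by
  set B := adversaryRun strat
  obtain ⟨σ, hσ⟩ := exists_equiv_fin_lt_iff (adversaryKey_injective B) (Fintype.card_fin n)
  have hrun : seq σ = B := by
    funext i
    induction i using Nat.strong_induction_on with
    | _ i ih =>
      calc seq σ i = strat (Learned (fun x y => σ x < σ y) (seq σ) i) := hseq σ i
        _ = strat (Learned (fun x y => σ x < σ y) B i) := by rw [learned_congr ih]
        _ = strat (Learned (fun x y => adversaryKey B x < adversaryKey B y) B i) := by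
          simp only [hσ]
        _ = B i := (adversaryRun_eq strat i).symm
  refine ⟨σ, fun m hm u v huv => ?_⟩
  rw [hrun] at hm ⊢
  have hr : ∀ x y, σ x < σ y → adversaryKey B x < adversaryKey B y := fun x y => (hσ x y).1
  rcases (σ.injective.ne huv).lt_or_gt with h | h
  · exact exists_separates_of_learned hr (hm u v h)
  · obtain ⟨i, hi, hsep⟩ := exists_separates_of_learned hr (hm v u h)
    exact ⟨i, hi, hsep.symm⟩

/-- Any deterministic adaptive algorithm (`strat`, choosing the next intervention set as a
function of the directions learned so far) that learns every transitive tournament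
orientation of `K_n` — where intervening on `S` reveals the cut edges of `S` (rule R0) and
the knowledge is closed under Meek rule R2 (transitive closure) — must, for some orientation
`σ`, produce a family of intervention sets that is a separating system on the `n` vertices.
Here `seq σ` is the sequence of interventions the algorithm produces against orientation
`σ`, and the learned relation after `m` interventions is the transitive closure of the
revealed cut directions. -/
theorem stmt18 (n : ℕ)
    (strat : (Fin n → Fin n → Prop) → Set (Fin n))
    (seq : (Fin n ≃ Fin n) → ℕ → Set (Fin n))
    (hseq : ∀ (σ : Fin n ≃ Fin n) (m : ℕ),
      seq σ m = strat (fun a b : Fin n => Relation.TransGen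
        (fun x y : Fin n => σ x < σ y ∧
          ∃ i < m, (x ∈ seq σ i ∧ y ∉ seq σ i) ∨ (y ∈ seq σ i ∧ x ∉ seq σ i)) a b))
    (hlearn : ∀ σ : Fin n ≃ Fin n, ∃ m : ℕ, ∀ a b : Fin n, σ a < σ b →
      Relation.TransGen
        (fun x y : Fin n => σ x < σ y ∧
          ∃ i < m, (x ∈ seq σ i ∧ y ∉ seq σ i) ∨ (y ∈ seq σ i ∧ x ∉ seq σ i)) a b) :
    ∃ σ : Fin n ≃ Fin n, ∀ m : ℕ,
      (∀ a b : Fin n, σ a < σ b →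
        Relation.TransGen
          (fun x y : Fin n => σ x < σ y ∧
            ∃ i < m, (x ∈ seq σ i ∧ y ∉ seq σ i) ∨ (y ∈ seq σ i ∧ x ∉ seq σ i)) a b) →
      ∀ u v : Fin n, u ≠ v → ∃ i < m,
        (u ∈ seq σ i ∧ v ∉ seq σ i) ∨ (v ∈ seq σ i ∧ u ∉ seq σ i) :=
  stmt18_general n strat seq hseq
end
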